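/- Let W be a multigraphon with ρ(W) ∈ (0,∞), and for t ∈ [0,∞) let W_t be the multigraphon defined by W_t(x,y,k) = Σ_{h=0}^∞ W(x,y,h)·q(t,h,k, D(W,x)D(W,y)/ρ(W)) for x≠y and W_t(x,x,k) = 1[2|k]·Σ_{h=0}^∞ W(x,x,2h)·q(t,h,k/2, D(W,x)²/(2ρ(W))). Then the average degree function is preserved by the edge evolution: for every t ≥ 0 and every x ∈ [0,1] with D(W,x) < ∞, D(W_t, x) = D(W, x). -/
import Mathlib


open MeasureTheory Filter Set
open scoped Classical ENNReal Topology BigOperators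

noncomputable section

/-- `B : ℕ → ℕ → ℕ` is the adjacency matrix of a multigraph on vertex set `{0,…,n-1}`:
symmetric, even diagonal entries (loops counted twice), vanishing outside `[0,n)²`. -/
def IsAdjOn (n : ℕ) (B : ℕ → ℕ → ℕ) : Prop :=
  (∀ i j, B i j = B j i) ∧ (∀ i, 2 ∣ B i i) ∧ ∀ i j, n ≤ i ∨ n ≤ j → B i j = 0

/-- Degree `d(B,i)` of vertex `i` in a multigraph on `n` vertices. -/
def degB (n : ℕ) (B : ℕ → ℕ → ℕ) (i : ℕ) : ℕ := ∑ j ∈ Finset.range n, B i j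

/-- Adjacency matrix of a multigraph on `n` vertices with `m` edges. -/
def IsAdjOnM (n m : ℕ) (B : ℕ → ℕ → ℕ) : Prop :=
  IsAdjOn n B ∧ ∑ i ∈ Finset.range n, ∑ j ∈ Finset.range n, B i j = 2 * m

/-- Top-left `k × k` submatrix (set to zero outside). -/
def subMat (k : ℕ) (B : ℕ → ℕ → ℕ) : ℕ → ℕ → ℕ :=
  fun i j => if i < k ∧ j < k then B i j else 0

/-- Induced homomorphism density `t_=(A,B)` of a `k`-vertex multigraph in an `n`-vertex one. -/
def tEqB (k n : ℕ) (A B : ℕ → ℕ → ℕ) : ℝ :=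
  ((Finset.univ.filter fun φ : Fin k → Fin n =>
      ∀ i j : Fin k, A i j = B (φ i) (φ j)).card : ℝ) / (n : ℝ) ^ k

/-- A multigraphon: symmetric, probability distribution on ℕ in each fibre over `[0,1]²`,
no odd diagonal values. -/
def IsMultigraphon (W : ℝ → ℝ → ℕ → ℝ) : Prop :=
  Measurable (fun p : ℝ × ℝ × ℕ => W p.1 p.2.1 p.2.2) ∧
  (∀ x y k, 0 ≤ W x y k ∧ W x y k ≤ 1) ∧
  (∀ x y k, W x y k = W y x k) ∧
  (∀ x ∈ Icc (0:ℝ) 1, ∀ y ∈ Icc (0:ℝ) 1, (∑' k : ℕ, W x y k) = 1) ∧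
  (∀ x k, W x x (2 * k + 1) = 0)

/-- Induced homomorphism density `t_=(A,W)` of a multigraph in a multigraphon. -/
def tEqW (k : ℕ) (A : ℕ → ℕ → ℕ) (W : ℝ → ℝ → ℕ → ℝ) : ℝ :=
  ∫ x : Fin k → ℝ in Set.univ.pi (fun _ : Fin k => Icc (0:ℝ) 1),
    ∏ i : Fin k, ∏ j ∈ Finset.univ.filter (fun j : Fin k => i ≤ j),
      W (x i) (x j) (A i j)

/-- The average degree `D(W,x)` of a multigraphon at `x`. -/
def degW (W : ℝ → ℝ → ℕ → ℝ) (x : ℝ) : ℝ :=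
  ∫ y in Icc (0:ℝ) 1, ∑' k : ℕ, (k : ℝ) * W x y k

/-- The edge density `ρ(W)` of a multigraphon. -/
def rhoW (W : ℝ → ℝ → ℕ → ℝ) : ℝ := ∫ x in Icc (0:ℝ) 1, degW W x

/-- One step of the edge reconnecting dynamics: the edge `{vold, w}` is replaced by `{vnew, w}`. -/
def stepER (B : ℕ → ℕ → ℕ) (vold w vnew : ℕ) : ℕ → ℕ → ℕ := fun a b =>
  B a b - (if a = vold ∧ b = w then 1 else 0) - (if a = w ∧ b = vold then 1 else 0)
    + (if a = vnew ∧ b = w then 1 else 0) + (if a = w ∧ b = vnew then 1 else 0)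

/-- Transition probability of the edge reconnecting model with parameter `κ`
on multigraphs with `n` vertices and `m` edges. -/
def transER (κ : ℝ) (n m : ℕ) (B B' : ℕ → ℕ → ℕ) : ℝ :=
  ∑ v ∈ Finset.range n, ∑ w ∈ Finset.range n, ∑ u ∈ Finset.range n,
    ((B v w : ℝ) / (2 * m)) * (((degB n B u : ℝ) + κ) / (2 * m + n * κ)) *
      (if B' = stepER B v w u then 1 else 0)

/-- `(X T)_{T≥0}` is an edge reconnecting model with parameter `κ` on `A_n^m`:
a Markov chain with the edge reconnecting transition probabilities. -/
def IsEdgeReconnecting (κ : ℝ) {Ω : Type*} [MeasurableSpace Ω] (μ : Measure Ω)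
    (n m : ℕ) (X : ℕ → Ω → ℕ → ℕ → ℕ) : Prop :=
  (∀ T i j, Measurable fun ω => X T ω i j) ∧
  (∀ T ω, IsAdjOnM n m (X T ω)) ∧
  ∀ (T : ℕ) (past : ℕ → ℕ → ℕ → ℕ) (B' : ℕ → ℕ → ℕ),
    μ {ω | (∀ S ≤ T, X S ω = past S) ∧ X (T + 1) ω = B'} =
      μ {ω | ∀ S ≤ T, X S ω = past S} * ENNReal.ofReal (transER κ n m (past T) B')

/-- Vertex exchangeability of a random adjacency matrix on `n` vertices. -/
def VertexExchangeable {Ω : Type*} [MeasurableSpace Ω] (μ : Measure Ω)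
    (n : ℕ) (X0 : Ω → ℕ → ℕ → ℕ) : Prop :=
  ∀ τ : Equiv.Perm ℕ, (∀ i, n ≤ i → τ i = i) →
    ∀ B : ℕ → ℕ → ℕ, μ {ω | X0 ω = B} = μ {ω | (fun i j => X0 ω (τ i) (τ j)) = B}

/-- Poisson point probability `p(k,λ)`. -/
def poiP (k : ℕ) (l : ℝ) : ℝ := Real.exp (-l) * l ^ k / (Nat.factorial k : ℝ)

/-- Binomial point probability `b(k,n,p)`. -/
def binP (k n : ℕ) (p : ℝ) : ℝ := (n.choose k : ℝ) * p ^ k * (1 - p) ^ (n - k)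

/-- `q(t,h,k,μ)`: time-`t` transition probability from `h` to `k` of the M/M/∞ queue with
arrival rate `μ` and service rate 1. -/
def qMM (t : ℝ) (h k : ℕ) (μ : ℝ) : ℝ :=
  ∑ l ∈ Finset.range (k + 1), binP l h (Real.exp (-t)) * poiP (k - l) ((1 - Real.exp (-t)) * μ)

/-- The multigraphon `W_t` describing the edge reconnecting model on the `n²` time scale. -/
def WtER (W : ℝ → ℝ → ℕ → ℝ) (t : ℝ) : ℝ → ℝ → ℕ → ℝ := fun x y k =>
  if x = y then
    (if 2 ∣ k then
      ∑' h : ℕ, W x x (2 * h) * qMM t h (k / 2) (degW W x ^ 2 / (2 * rhoW W))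
     else 0)
  else ∑' h : ℕ, W x y h * qMM t h k (degW W x * degW W y / rhoW W)

/-- Gamma density `g(x,α,β)`. -/
def gamP (x α β : ℝ) : ℝ :=
  if 0 < x then x ^ (α - 1) * (β ^ α * Real.exp (-(β * x)) / Real.Gamma α) else 0

/-- `τ(α,t) = α/(e^{αt}-1)`. -/
def tauCIR (α t : ℝ) : ℝ := α / (Real.exp (α * t) - 1)

/-- Transition density `f(t,z,y)` of the Cox–Ingersoll–Ross process with parameters `κ, ρ`. -/
def cirDens (κ ρ t z y : ℝ) : ℝ :=
  ∑' i : ℕ, poiP i (z * tauCIR (κ / ρ) t) * gamP y ((κ : ℝ) + i) (tauCIR (κ / ρ) t + κ / ρ)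

/-- The measure `dF₀` where `F₀(x) = Leb{y ∈ [0,1] : D(W,y) ≤ x}`: the push-forward of
Lebesgue measure on `[0,1]` under the average degree function. -/
def F0meas (W : ℝ → ℝ → ℕ → ℝ) : Measure ℝ :=
  Measure.map (degW W) (volume.restrict (Icc (0:ℝ) 1))

/-- The distribution function `F₀(x) = Leb{y ∈ [0,1] : D(W,y) ≤ x}`. -/
def F0fun (W : ℝ → ℝ → ℕ → ℝ) (x : ℝ) : ℝ :=
  (volume {y ∈ Icc (0:ℝ) 1 | degW W y ≤ x}).toReal

/-- Generalized inverse `F₀⁻¹(x) = min{z : F₀(z) ≥ x}`. -/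
def F0inv (W : ℝ → ℝ → ℕ → ℝ) (x : ℝ) : ℝ := sInf {z : ℝ | x ≤ F0fun W z}

/-- The mixed CIR density `f(t,y) = ∫₀^∞ f(t,z,y) dF₀(z)`. -/
def fCIRmix (κ ρ : ℝ) (W : ℝ → ℝ → ℕ → ℝ) (t y : ℝ) : ℝ :=
  ∫ z, cirDens κ ρ t z y ∂(F0meas W)

/-- The distribution function `F_t(x) = ∫₀ˣ f(t,y) dy`. -/
def Fcir (κ ρ : ℝ) (W : ℝ → ℝ → ℕ → ℝ) (t x : ℝ) : ℝ :=
  ∫ y in Ioc (0:ℝ) x, fCIRmix κ ρ W t y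

/-- Generalized inverse `F_t⁻¹(x) = min{z : F_t(z) ≥ x}`. -/
def FcirInv (κ ρ : ℝ) (W : ℝ → ℝ → ℕ → ℝ) (t x : ℝ) : ℝ :=
  sInf {z : ℝ | x ≤ Fcir κ ρ W t z}

/-- The multigraphon `Ŵ_t` describing the edge reconnecting model on the `n³` time scale. -/
def WhatER (κ : ℝ) (W : ℝ → ℝ → ℕ → ℝ) (t : ℝ) : ℝ → ℝ → ℕ → ℝ := fun x y k =>
  if x = y then
    (if 2 ∣ k then poiP (k / 2) (FcirInv κ (rhoW W) W t x ^ 2 / (2 * rhoW W)) else 0)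
  else poiP k (FcirInv κ (rhoW W) W t x * FcirInv κ (rhoW W) W t y / rhoW W)

/-- The product measure on `ℝ^k` of `k` i.i.d. coordinates with density `f(t,·)`. -/
def cirPi (κ ρ : ℝ) (W : ℝ → ℝ → ℕ → ℝ) (t : ℝ) (k : ℕ) : Measure (Fin k → ℝ) :=
  volume.withDensity fun z => ∏ i : Fin k, ENNReal.ofReal (fCIRmix κ ρ W t (z i))

/-- Condition (E): uniform exponential moment bound for the initial multigraphs. -/
def CondE (B : (n : ℕ) → ℕ → ℕ → ℕ) : Prop :=
  ∃ lam : ℝ, 0 < lam ∧ ∃ C : ℝ, ∀ n : ℕ,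
    (∑ i ∈ Finset.range n, ∑ j ∈ (Finset.range n).filter (fun j => i < j),
        Real.exp (lam * (B n i j : ℝ))) ≤ C * (n.choose 2 : ℝ) ∧
    (∑ i ∈ Finset.range n, Real.exp (lam * (B n i i : ℝ))) ≤ C * (n : ℝ)

/-- Convergence `B_n → W` of a sequence of multigraphs to a multigraphon. -/
def GraphSeqConvTo (B : (n : ℕ) → ℕ → ℕ → ℕ) (W : ℝ → ℝ → ℕ → ℝ) : Prop :=
  ∀ (k : ℕ) (A : ℕ → ℕ → ℕ), IsAdjOn k A →
    Tendsto (fun n => tEqB k n A (B n)) atTop (𝓝 (tEqW k A W))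


lemma poiP_nonneg {k : ℕ} {l : ℝ} (hl : 0 ≤ l) : 0 ≤ poiP k l := by
  unfold poiP; positivity

lemma summable_poiP (l : ℝ) : Summable fun k => poiP k l := by
  simpa [poiP, mul_div_assoc] using (Real.summable_pow_div_factorial l).mul_left (Real.exp (-l))

lemma tsum_poiP (l : ℝ) : ∑' k, poiP k l = 1 := by
  have h : ∑' k : ℕ, l ^ k / (Nat.factorial k : ℝ) = Real.exp l := by
    rw [Real.exp_eq_exp_ℝ, NormedSpace.exp_eq_tsum_div]
  calc ∑' k, poiP k l = Real.exp (-l) * ∑' k : ℕ, l ^ k / (Nat.factorial k : ℝ) := by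
        rw [← tsum_mul_left]; simp [poiP, mul_div_assoc]
    _ = 1 := by rw [h, ← Real.exp_add]; simp

lemma poiP_succ (k : ℕ) (l : ℝ) : ((k:ℝ)+1) * poiP (k+1) l = l * poiP k l := by
  unfold poiP
  rw [Nat.factorial_succ]
  have hk : (Nat.factorial k : ℝ) ≠ 0 := Nat.cast_ne_zero.mpr (Nat.factorial_ne_zero k)
  have hk1 : ((k:ℝ) + 1) ≠ 0 := by positivity
  push_cast
  field_simp
  ring

lemma succ_poiP_eq (l : ℝ) :
    (fun n : ℕ => ((n+1 : ℕ):ℝ) * poiP (n+1) l) = fun n => l * poiP n l := by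
  funext n; push_cast; exact poiP_succ n l

lemma summable_id_poiP (l : ℝ) : Summable fun k : ℕ => (k:ℝ) * poiP k l := by
  rw [← summable_nat_add_iff 1]
  simp only [Nat.cast_add, Nat.cast_one, poiP_succ]
  exact (summable_poiP l).mul_left l

lemma tsum_id_poiP (l : ℝ) : ∑' k : ℕ, (k:ℝ) * poiP k l = l := by
  rw [Summable.tsum_eq_zero_add (summable_id_poiP l)]
  simp only [Nat.cast_zero, zero_mul, zero_add]
  simp only [Nat.cast_add, Nat.cast_one, poiP_succ]
  rw [tsum_mul_left, tsum_poiP, mul_one]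

lemma binP_nonneg {k n : ℕ} {p : ℝ} (h0 : 0 ≤ p) (h1 : p ≤ 1) : 0 ≤ binP k n p := by
  have := sub_nonneg.mpr h1
  unfold binP; positivity

lemma binP_eq_zero {k n : ℕ} (h : n < k) (p : ℝ) : binP k n p = 0 := by
  simp [binP, Nat.choose_eq_zero_of_lt h]

lemma binP_support {n : ℕ} (p : ℝ) (f : ℕ → ℝ) (hf : ∀ k, n < k → f k = 0) :
    ∀ k ∉ Finset.range (n+1), f k = 0 := by
  intro k hk
  simp only [Finset.mem_range, not_lt, Nat.add_one_le_iff] at hk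
  exact hf k hk

lemma summable_binP (n : ℕ) (p : ℝ) : Summable fun k => binP k n p :=
  summable_of_ne_finset_zero (s := Finset.range (n+1))
    (binP_support p _ fun k hk => binP_eq_zero hk p)

lemma summable_id_binP (n : ℕ) (p : ℝ) : Summable fun k : ℕ => (k:ℝ) * binP k n p :=
  summable_of_ne_finset_zero (s := Finset.range (n+1))
    (binP_support p _ fun k hk => by rw [binP_eq_zero hk p, mul_zero])

lemma tsum_binP (n : ℕ) (p : ℝ) : ∑' k, binP k n p = 1 := by
  rw [tsum_eq_sum (s := Finset.range (n+1))
    (binP_support p _ fun k hk => binP_eq_zero hk p)]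
  have h2 := congrArg (Polynomial.eval p) (bernsteinPolynomial.sum ℝ n)
  simpa [Polynomial.eval_finset_sum, bernsteinPolynomial, binP] using h2

lemma tsum_id_binP (n : ℕ) (p : ℝ) : ∑' k : ℕ, (k:ℝ) * binP k n p = n * p := by
  rw [tsum_eq_sum (s := Finset.range (n+1))
    (binP_support p _ fun k hk => by rw [binP_eq_zero hk p, mul_zero])]
  have h2 := congrArg (Polynomial.eval p) (bernsteinPolynomial.sum_smul ℝ n)
  simpa [Polynomial.eval_finset_sum, bernsteinPolynomial, binP, mul_assoc] using h2


lemma exp_neg_le_one {t : ℝ} (ht : 0 ≤ t) : Real.exp (-t) ≤ 1 :=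
  Real.exp_le_one_iff.mpr (neg_nonpos.mpr ht)

lemma lam_nonneg {t μ : ℝ} (ht : 0 ≤ t) (hμ : 0 ≤ μ) : 0 ≤ (1 - Real.exp (-t)) * μ :=
  mul_nonneg (sub_nonneg.mpr (exp_neg_le_one ht)) hμ

lemma qMM_nonneg {t μ : ℝ} (ht : 0 ≤ t) (hμ : 0 ≤ μ) (h k : ℕ) : 0 ≤ qMM t h k μ :=
  Finset.sum_nonneg fun l _ => mul_nonneg
    (binP_nonneg (Real.exp_nonneg _) (exp_neg_le_one ht)) (poiP_nonneg (lam_nonneg ht hμ))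

private lemma norm_summable_of_nonneg {f : ℕ → ℝ} (hf : Summable f) :
    Summable fun k => ‖f k‖ := summable_norm_iff.mpr hf

lemma summable_qMM (t μ : ℝ) (h : ℕ) : Summable fun k => qMM t h k μ :=
  (summable_norm_sum_mul_range_of_summable_norm
    (f := fun l => binP l h (Real.exp (-t))) (g := fun m => poiP m ((1 - Real.exp (-t)) * μ))
    (norm_summable_of_nonneg (summable_binP _ _))
    (norm_summable_of_nonneg (summable_poiP _))).of_norm

lemma tsum_qMM (t μ : ℝ) (h : ℕ) : ∑' k, qMM t h k μ = 1 := by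
  unfold qMM
  rw [← tsum_mul_tsum_eq_tsum_sum_range_of_summable_norm
    (norm_summable_of_nonneg (summable_binP h (Real.exp (-t))))
    (norm_summable_of_nonneg (summable_poiP ((1 - Real.exp (-t)) * μ))),
    tsum_binP, tsum_poiP, one_mul]

lemma id_mul_qMM (t μ : ℝ) (h k : ℕ) : (k:ℝ) * qMM t h k μ
    = (∑ l ∈ Finset.range (k+1),
        ((l:ℝ) * binP l h (Real.exp (-t))) * poiP (k-l) ((1 - Real.exp (-t)) * μ))
    + ∑ l ∈ Finset.range (k+1),
        binP l h (Real.exp (-t)) * (((k-l:ℕ):ℝ) * poiP (k-l) ((1 - Real.exp (-t)) * μ)) := by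
  rw [qMM, Finset.mul_sum, ← Finset.sum_add_distrib]
  refine Finset.sum_congr rfl fun l hl => ?_
  have hlk : l ≤ k := Nat.lt_succ_iff.mp (Finset.mem_range.mp hl)
  rw [Nat.cast_sub hlk]
  ring

lemma summable_id_qMM (t μ : ℝ) (h : ℕ) : Summable fun k : ℕ => (k:ℝ) * qMM t h k μ := by
  have h1 := (summable_norm_sum_mul_range_of_summable_norm
    (f := fun l => (l:ℝ) * binP l h (Real.exp (-t)))
    (g := fun m => poiP m ((1 - Real.exp (-t)) * μ))
    (norm_summable_of_nonneg (summable_id_binP _ _))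
    (norm_summable_of_nonneg (summable_poiP _))).of_norm
  have h2 := (summable_norm_sum_mul_range_of_summable_norm
    (f := fun l => binP l h (Real.exp (-t)))
    (g := fun m => (m:ℝ) * poiP m ((1 - Real.exp (-t)) * μ))
    (norm_summable_of_nonneg (summable_binP _ _))
    (norm_summable_of_nonneg (summable_id_poiP _))).of_norm
  have := h1.add h2
  simpa only [← id_mul_qMM] using this

lemma tsum_id_qMM (t μ : ℝ) (h : ℕ) : ∑' k : ℕ, (k:ℝ) * qMM t h k μ
    = (h:ℝ) * Real.exp (-t) + (1 - Real.exp (-t)) * μ := by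
  have h1s := (summable_norm_sum_mul_range_of_summable_norm
    (f := fun l => (l:ℝ) * binP l h (Real.exp (-t)))
    (g := fun m => poiP m ((1 - Real.exp (-t)) * μ))
    (norm_summable_of_nonneg (summable_id_binP _ _))
    (norm_summable_of_nonneg (summable_poiP _))).of_norm
  have h2s := (summable_norm_sum_mul_range_of_summable_norm
    (f := fun l => binP l h (Real.exp (-t)))
    (g := fun m => (m:ℝ) * poiP m ((1 - Real.exp (-t)) * μ))
    (norm_summable_of_nonneg (summable_binP _ _))
    (norm_summable_of_nonneg (summable_id_poiP _))).of_norm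
  calc ∑' k : ℕ, (k:ℝ) * qMM t h k μ
      = (∑' k : ℕ, ∑ l ∈ Finset.range (k+1),
          ((l:ℝ) * binP l h (Real.exp (-t))) * poiP (k-l) ((1 - Real.exp (-t)) * μ))
        + ∑' k : ℕ, ∑ l ∈ Finset.range (k+1),
          binP l h (Real.exp (-t)) * (((k-l:ℕ):ℝ) * poiP (k-l) ((1 - Real.exp (-t)) * μ)) := by
        simp only [id_mul_qMM]
        exact Summable.tsum_add h1s h2s
    _ = (h:ℝ) * Real.exp (-t) + (1 - Real.exp (-t)) * μ := by
        rw [← tsum_mul_tsum_eq_tsum_sum_range_of_summable_norm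
            (norm_summable_of_nonneg (summable_id_binP h (Real.exp (-t))))
            (norm_summable_of_nonneg (summable_poiP ((1 - Real.exp (-t)) * μ))),
          ← tsum_mul_tsum_eq_tsum_sum_range_of_summable_norm
            (norm_summable_of_nonneg (summable_binP h (Real.exp (-t))))
            (norm_summable_of_nonneg (summable_id_poiP ((1 - Real.exp (-t)) * μ))),
          tsum_id_binP, tsum_binP, tsum_id_poiP, tsum_poiP, one_mul, mul_one]

lemma key_tsum {t μ : ℝ} (ht : 0 ≤ t) (hμ : 0 ≤ μ) (a : ℕ → ℝ)
    (ha0 : ∀ h, 0 ≤ a h) (haS : Summable a) (haT : ∑' h, a h = 1)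
    (hS : Summable fun h : ℕ => (h:ℝ) * a h) :
    ∑' k : ℕ, (k:ℝ) * ∑' h : ℕ, a h * qMM t h k μ
      = Real.exp (-t) * (∑' h : ℕ, (h:ℝ) * a h) + (1 - Real.exp (-t)) * μ := by
  have hF : Summable (fun q : ℕ × ℕ => a q.1 * ((q.2:ℝ) * qMM t q.1 q.2 μ)) := by
    rw [summable_prod_of_nonneg (fun q => mul_nonneg (ha0 q.1)
      (mul_nonneg (Nat.cast_nonneg q.2) (qMM_nonneg ht hμ q.1 q.2)))]
    refine ⟨fun h => (summable_id_qMM t μ h).mul_left (a h), ?_⟩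
    have he : (fun h : ℕ => ∑' k : ℕ, a h * ((k:ℝ) * qMM t h k μ))
        = fun h : ℕ => Real.exp (-t) * ((h:ℝ) * a h) + ((1 - Real.exp (-t)) * μ) * a h := by
      funext h
      rw [tsum_mul_left, tsum_id_qMM]
      ring
    rw [he]
    exact (hS.mul_left _).add (haS.mul_left _)
  calc ∑' k : ℕ, (k:ℝ) * ∑' h : ℕ, a h * qMM t h k μ
      = ∑' k : ℕ, ∑' h : ℕ, a h * ((k:ℝ) * qMM t h k μ) := by
        refine tsum_congr fun k => ?_
        rw [← tsum_mul_left]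
        exact tsum_congr fun h => by ring
    _ = ∑' h : ℕ, ∑' k : ℕ, a h * ((k:ℝ) * qMM t h k μ) :=
        Summable.tsum_comm hF
    _ = ∑' h : ℕ, (Real.exp (-t) * ((h:ℝ) * a h) + ((1 - Real.exp (-t)) * μ) * a h) := by
        refine tsum_congr fun h => ?_
        rw [tsum_mul_left, tsum_id_qMM]
        ring
    _ = Real.exp (-t) * (∑' h : ℕ, (h:ℝ) * a h) + (1 - Real.exp (-t)) * μ := by
        rw [Summable.tsum_add (hS.mul_left _) (haS.mul_left _), tsum_mul_left, tsum_mul_left, haT, mul_one]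

/-- The average degree function is preserved by the edge evolution: `D(W_t,x) = D(W,x)`. -/
theorem Wt_preserves_average_degree
    (W : ℝ → ℝ → ℕ → ℝ) (hW : IsMultigraphon W)
    (hρpos : 0 < rhoW W) (hρfin : IntegrableOn (degW W) (Icc (0:ℝ) 1))
    (t : ℝ) (ht : 0 ≤ t) (x : ℝ) (hx : x ∈ Icc (0:ℝ) 1)
    -- `D(W,x) < ∞`: the defining sums and integral converge
    (hsum : ∀ y ∈ Icc (0:ℝ) 1, Summable fun k : ℕ => (k : ℝ) * W x y k)
    (hfin : IntegrableOn (fun y => ∑' k : ℕ, (k : ℝ) * W x y k) (Icc (0:ℝ) 1)) :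
    degW (WtER W t) x = degW W x := by
  have hDnn : ∀ z, 0 ≤ degW W z := fun z =>
    setIntegral_nonneg measurableSet_Icc fun y _ =>
      tsum_nonneg fun k => mul_nonneg (Nat.cast_nonneg k) (hW.2.1 z y k).1
  set c : ℝ := (1 - Real.exp (-t)) * degW W x / rhoW W with hc
  have hEq : (fun y => ∑' k : ℕ, (k:ℝ) * WtER W t x y k)
      =ᵐ[volume.restrict (Icc (0:ℝ) 1)]
      (fun y => Real.exp (-t) * (∑' k : ℕ, (k:ℝ) * W x y k) + c * degW W y) := by
    have h1 : ∀ᵐ y ∂(volume.restrict (Icc (0:ℝ) 1)), y ≠ x := by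
      refine ae_iff.mpr ?_
      have hs : {y : ℝ | ¬ y ≠ x} = {x} := by ext y; simp [eq_comm]
      rw [hs, Measure.restrict_apply (measurableSet_singleton x)]
      exact measure_mono_null inter_subset_left (measure_singleton x)
    filter_upwards [h1, ae_restrict_mem measurableSet_Icc] with y hyx hy
    have hxy : x ≠ y := fun e => hyx e.symm
    have hq : ∀ k, WtER W t x y k
        = ∑' h, W x y h * qMM t h k (degW W x * degW W y / rhoW W) := fun k => by
      simp [WtER, hxy]
    have hμ : 0 ≤ degW W x * degW W y / rhoW W :=
      div_nonneg (mul_nonneg (hDnn x) (hDnn y)) hρpos.le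
    have haS : Summable fun h => W x y h := by
      by_contra hcon
      have h0 := tsum_eq_zero_of_not_summable hcon
      rw [hW.2.2.2.1 x hx y hy] at h0
      norm_num at h0
    have heq2 := key_tsum (t := t) (μ := degW W x * degW W y / rhoW W) ht hμ
      (fun h => W x y h) (fun h => (hW.2.1 x y h).1) haS (hW.2.2.2.1 x hx y hy) (hsum y hy)
    calc ∑' k : ℕ, (k:ℝ) * WtER W t x y k
        = ∑' k : ℕ, (k:ℝ) * ∑' h : ℕ,
            W x y h * qMM t h k (degW W x * degW W y / rhoW W) :=
          tsum_congr fun k => by rw [hq k]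
      _ = Real.exp (-t) * (∑' h : ℕ, (h:ℝ) * W x y h)
            + (1 - Real.exp (-t)) * (degW W x * degW W y / rhoW W) := heq2
      _ = Real.exp (-t) * (∑' k : ℕ, (k:ℝ) * W x y k) + c * degW W y := by
          rw [hc]; ring
  have hI1 : IntegrableOn (fun y => Real.exp (-t) * (∑' k : ℕ, (k:ℝ) * W x y k))
      (Icc (0:ℝ) 1) := hfin.const_mul _
  have hI2 : IntegrableOn (fun y => c * degW W y) (Icc (0:ℝ) 1) := hρfin.const_mul _
  have hstep : degW (WtER W t) x
      = ∫ y in Icc (0:ℝ) 1,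
          (Real.exp (-t) * (∑' k : ℕ, (k:ℝ) * W x y k) + c * degW W y) := by
    have h0 : degW (WtER W t) x
        = ∫ y in Icc (0:ℝ) 1, ∑' k : ℕ, (k:ℝ) * WtER W t x y k := rfl
    rw [h0]
    exact integral_congr_ae hEq
  have e1 : ∫ y in Icc (0:ℝ) 1, ∑' k : ℕ, (k:ℝ) * W x y k = degW W x := rfl
  have e2 : ∫ y in Icc (0:ℝ) 1, degW W y = rhoW W := rfl
  rw [hstep, integral_add hI1 hI2, integral_const_mul, integral_const_mul, e1, e2, hc]
  field_simp
  ring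

end
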